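/- For all integers N, M ≥ 1: E_N ⋆ E_M = E_{max(N,M)}. -/

import Mathlib

open PowerSeries

/-- Formal exponential: for `F` with zero constant coefficient this is
`exp F = ∑ F^k / k!` (each coefficient is a finite sum). -/
noncomputable def pexp {A : Type*} [CommRing A] [Algebra ℚ A] (F : PowerSeries A) :
    PowerSeries A :=
  PowerSeries.mk fun n =>
    ∑ k ∈ Finset.range (n + 1), ((k.factorial : ℚ)⁻¹) • (PowerSeries.coeff n (F ^ k))

/-- Formal logarithm: for `f` with constant coefficient `1` this is
`log f = ∑_{k≥1} (-1)^{k+1} (f-1)^k / k`; it is the inverse bijection of `pexp`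
between `X·A[[X]]` and `𝒜 = 1 + X·A[[X]]`. -/
noncomputable def plog {A : Type*} [CommRing A] [Algebra ℚ A] (f : PowerSeries A) :
    PowerSeries A :=
  PowerSeries.mk fun n =>
    if n = 0 then 0 else
      ∑ k ∈ Finset.range (n + 1), (((-1 : ℚ) ^ (k + 1)) / k) • (PowerSeries.coeff n ((f - 1) ^ k))

/-- The eñe product: if `f = exp (∑_{i≥1} Fᵢ Xⁱ)` and `g = exp (∑_{i≥1} Gᵢ Xⁱ)` then
`f ⋆ g = exp (−∑_{i≥1} i·Fᵢ·Gᵢ·Xⁱ)`. -/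
noncomputable def ene {A : Type*} [CommRing A] [Algebra ℚ A] (f g : PowerSeries A) :
    PowerSeries A :=
  pexp (PowerSeries.mk fun i =>
    -(i : A) * (PowerSeries.coeff i (plog f)) * (PowerSeries.coeff i (plog g)))

/-- The Weierstrass factor `E_N = (1−X)·exp(X + X²/2 + ⋯ + X^N/N)
= exp(−∑_{i>N} Xⁱ/i)`. -/
noncomputable def weierstrassE {A : Type*} [CommRing A] [Algebra ℚ A] (N : ℕ) :
    PowerSeries A :=
  pexp (PowerSeries.mk fun i => if N < i then ((i : ℚ)⁻¹) • (-1 : A) else 0)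



section EneAux
open Finset
set_option linter.unusedSectionVars false
variable {A : Type*} [CommRing A] [Algebra ℚ A]

lemma coeff_pow_eq_zero {F : PowerSeries A} (hF : constantCoeff F = 0)
    {n k : ℕ} (h : n < k) : coeff n (F ^ k) = 0 := by
  have : (X : PowerSeries A) ^ k ∣ F ^ k :=
    pow_dvd_pow_of_dvd (X_dvd_iff.mpr hF) k
  exact (X_pow_dvd_iff.mp this) n h

lemma derivative_qsmul (q : ℚ) (f : PowerSeries A) :
    d⁄dX A (q • f) = q • d⁄dX A f := by
  ext n
  simp [coeff_derivative, PowerSeries.coeff_smul, smul_mul_assoc]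

noncomputable def P (F : PowerSeries A) (m : ℕ) : PowerSeries A :=
  ∑ k ∈ Finset.range m, ((k.factorial : ℚ)⁻¹) • F ^ k

lemma coeff_P (F : PowerSeries A) (m n : ℕ) :
    coeff n (P F m) = ∑ k ∈ Finset.range m, ((k.factorial : ℚ)⁻¹) • coeff n (F ^ k) := by
  simp [P, PowerSeries.coeff_smul]

lemma coeff_pexp_eq {F : PowerSeries A} (hF : constantCoeff F = 0) {n m : ℕ} (h : n < m) :
    coeff n (pexp F) = coeff n (P F m) := by
  rw [pexp, coeff_mk, coeff_P]
  rw [← Finset.sum_subset (Finset.range_subset_range.mpr h)]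
  intro k hk hk'
  rw [coeff_pow_eq_zero hF (by simp at hk'; omega), smul_zero]

lemma deriv_P (F : PowerSeries A) (m : ℕ) :
    d⁄dX A (P F (m + 1)) = d⁄dX A F * P F m := by
  rw [P, map_sum, Finset.sum_range_succ']
  rw [P, Finset.mul_sum]
  simp only [pow_zero, derivative_qsmul, Derivation.map_one_eq_zero, smul_zero, add_zero]
  refine Finset.sum_congr rfl fun k _ => ?_
  rw [Derivation.leibniz_pow, mul_smul_comm, smul_eq_mul,
    ← Nat.cast_smul_eq_nsmul ℚ, smul_smul]
  rw [Nat.add_sub_cancel, mul_comm (d⁄dX A F) (F ^ k)]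
  congr 1
  rw [Nat.factorial_succ]
  push_cast
  rw [mul_inv]
  field_simp

lemma coeff_mul_congr {u g h : PowerSeries A} {n : ℕ}
    (hc : ∀ j ≤ n, coeff j g = coeff j h) :
    coeff n (u * g) = coeff n (u * h) := by
  rw [coeff_mul, coeff_mul]
  refine Finset.sum_congr rfl fun p hp => ?_
  rw [Finset.HasAntidiagonal.mem_antidiagonal] at hp
  rw [hc p.2 (by omega)]

lemma derivative_pexp {F : PowerSeries A} (hF : constantCoeff F = 0) :
    d⁄dX A (pexp F) = d⁄dX A F * pexp F := by
  ext n
  rw [coeff_derivative, coeff_pexp_eq hF (m := n + 2) (Nat.lt_succ_self (n+1)),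
    ← coeff_derivative, deriv_P]
  refine coeff_mul_congr (n := n) fun j hj => ?_
  exact (coeff_pexp_eq hF (m := n + 1) (by omega)).symm

lemma constantCoeff_pexp (F : PowerSeries A) : constantCoeff (pexp F) = 1 := by
  rw [← coeff_zero_eq_constantCoeff_apply, pexp, coeff_mk]
  simp

noncomputable def L (u : PowerSeries A) (m : ℕ) : PowerSeries A :=
  ∑ k ∈ Finset.range m, (((-1 : ℚ) ^ (k + 1)) / k) • u ^ k

lemma coeff_L (u : PowerSeries A) (m n : ℕ) :
    coeff n (L u m) = ∑ k ∈ Finset.range m, (((-1 : ℚ) ^ (k + 1)) / k) • coeff n (u ^ k) := by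
  simp [L, PowerSeries.coeff_smul]

lemma coeff_plog_eq {f : PowerSeries A} (hf : constantCoeff f = 1) {n m : ℕ} (h : n < m) :
    coeff n (plog f) = coeff n (L (f - 1) m) := by
  have hu : constantCoeff (f - 1) = 0 := by simp [hf]
  rw [plog, coeff_mk, coeff_L]
  rcases Nat.eq_zero_or_pos n with hn | hn
  · subst hn
    rw [if_pos rfl]
    refine (Finset.sum_eq_zero fun k hk => ?_).symm
    rcases Nat.eq_zero_or_pos k with hk0 | hk0
    · subst hk0; simp
    · rw [coeff_pow_eq_zero hu hk0, smul_zero]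
  · rw [if_neg (by omega)]
    rw [← Finset.sum_subset (Finset.range_subset_range.mpr h)]
    intro k hk hk'
    rw [coeff_pow_eq_zero hu (by simp at hk'; omega), smul_zero]

lemma deriv_L (u : PowerSeries A) (m : ℕ) :
    d⁄dX A (L u (m + 1)) = d⁄dX A u * ∑ j ∈ Finset.range m, (-1 : PowerSeries A) ^ j * u ^ j := by
  rw [L, map_sum, Finset.sum_range_succ']
  rw [Finset.mul_sum]
  simp only [pow_zero, derivative_qsmul, Derivation.map_one_eq_zero, smul_zero, add_zero]
  refine Finset.sum_congr rfl fun k _ => ?_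
  rw [Derivation.leibniz_pow, ← Nat.cast_smul_eq_nsmul ℚ, smul_smul, smul_eq_mul,
    Nat.add_sub_cancel]
  have : ((-1 : ℚ) ^ (k + 1 + 1) / (k + 1 : ℕ)) * ((k + 1 : ℕ) : ℚ) = (-1) ^ k := by
    push_cast
    field_simp
    ring
  rw [this]
  rw [Algebra.smul_def, map_pow, map_neg, map_one]
  ring

lemma one_add_mul_S (u : PowerSeries A) (m : ℕ) :
    (1 + u) * ∑ j ∈ Finset.range m, (-1 : PowerSeries A) ^ j * u ^ j = 1 - (-u) ^ m := by
  have h1 : ∀ j, (-1 : PowerSeries A) ^ j * u ^ j = (-u) ^ j := fun j => by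
    rw [neg_pow u j]
  simp_rw [h1]
  have := geom_sum_mul (-u) m
  have h2 : (1 + u) * ∑ j ∈ Finset.range m, (-u) ^ j
      = -((∑ j ∈ Finset.range m, (-u) ^ j) * (-u - 1)) := by ring
  rw [h2, this]
  ring

lemma mul_derivative_plog {f : PowerSeries A} (hf : constantCoeff f = 1) :
    f * d⁄dX A (plog f) = d⁄dX A f := by
  have hu : constantCoeff (f - 1) = 0 := by simp [hf]
  ext n
  have step1 : coeff n (f * d⁄dX A (plog f)) = coeff n (f * d⁄dX A (L (f - 1) (n + 2))) := by
    refine coeff_mul_congr (n := n) fun j hj => ?_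
    rw [coeff_derivative, coeff_derivative, coeff_plog_eq hf (m := n + 2) (by omega)]
  rw [step1, deriv_L]
  have hdu : d⁄dX A (f - 1) = d⁄dX A f := by
    rw [map_sub, Derivation.map_one_eq_zero, sub_zero]
  rw [hdu]
  have step2 : f * (d⁄dX A f * ∑ j ∈ Finset.range (n + 1), (-1 : PowerSeries A) ^ j * (f - 1) ^ j)
      = d⁄dX A f * ((1 + (f - 1)) * ∑ j ∈ Finset.range (n + 1), (-1 : PowerSeries A) ^ j * (f - 1) ^ j) := by
    ring
  rw [step2, one_add_mul_S, mul_sub, mul_one, map_sub]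
  have step3 : coeff n (d⁄dX A f * (-(f - 1)) ^ (n + 1)) = 0 := by
    have hX : (X : PowerSeries A) ^ (n + 1) ∣ d⁄dX A f * (-(f - 1)) ^ (n + 1) :=
      Dvd.dvd.mul_left (pow_dvd_pow_of_dvd (X_dvd_iff.mpr (by simp [hf])) (n + 1)) _
    exact (X_pow_dvd_iff.mp hX) n (Nat.lt_succ_self n)
  rw [step3, sub_zero]

lemma mul_natCast_cancel {a b : A} {n : ℕ} (h : a * ((n+1 : ℕ) : A) = b * ((n+1 : ℕ) : A)) :
    a = b := by
  have h2 : ((n+1 : ℕ) : A) = algebraMap ℚ A ((n+1 : ℕ) : ℚ) := by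
    simp
  have h3 : algebraMap ℚ A ((n+1 : ℕ) : ℚ) * algebraMap ℚ A (((n+1 : ℕ) : ℚ)⁻¹) = 1 := by
    rw [← map_mul, mul_inv_cancel₀ (by positivity), map_one]
  calc a = a * (algebraMap ℚ A ((n+1 : ℕ) : ℚ) * algebraMap ℚ A (((n+1 : ℕ) : ℚ)⁻¹)) := by
          rw [h3, mul_one]
    _ = b * (algebraMap ℚ A ((n+1 : ℕ) : ℚ) * algebraMap ℚ A (((n+1 : ℕ) : ℚ)⁻¹)) := by
          rw [← mul_assoc, ← h2, h, h2, mul_assoc]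
    _ = b := by rw [h3, mul_one]

lemma plog_pexp {F : PowerSeries A} (hF : constantCoeff F = 0) :
    plog (pexp F) = F := by
  have h1 : constantCoeff (pexp F) = 1 := constantCoeff_pexp F
  have hunit : IsUnit (pexp F) := isUnit_iff_constantCoeff.mpr (by rw [h1]; exact isUnit_one)
  have key : pexp F * d⁄dX A (plog (pexp F)) = pexp F * d⁄dX A F := by
    rw [mul_derivative_plog h1, derivative_pexp hF, mul_comm]
  have hD : d⁄dX A (plog (pexp F)) = d⁄dX A F := by
    rcases hunit with ⟨v, hv⟩
    have := congrArg (fun x => (↑v⁻¹ : PowerSeries A) * x) key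
    simpa [← hv, ← mul_assoc] using this
  ext n
  cases n with
  | zero =>
    rw [coeff_zero_eq_constantCoeff_apply, coeff_zero_eq_constantCoeff_apply, hF,
      ← coeff_zero_eq_constantCoeff_apply, plog, coeff_mk, if_pos rfl]
  | succ n =>
    have := congrArg (coeff n) hD
    rw [coeff_derivative, coeff_derivative] at this
    have hcast : ((n : A) + 1) = ((n + 1 : ℕ) : A) := by push_cast; ring
    rw [hcast] at this
    exact mul_natCast_cancel this


lemma plog_weierstrassE (N : ℕ) :
    plog (weierstrassE N : PowerSeries A)
      = PowerSeries.mk fun i => if N < i then ((i : ℚ)⁻¹) • (-1 : A) else 0 := by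
  apply plog_pexp
  rw [← coeff_zero_eq_constantCoeff_apply, coeff_mk]
  simp

end EneAux

/-- For all `N, M ≥ 1`: `E_N ⋆ E_M = E_{max(N,M)}`. -/
theorem ene_weierstrass_max {A : Type*} [CommRing A] [Algebra ℚ A]
    (N M : ℕ) (hN : 1 ≤ N) (hM : 1 ≤ M) :
    ene (weierstrassE N) (weierstrassE M) = (weierstrassE (max N M) : PowerSeries A) := by
  rw [ene, plog_weierstrassE, plog_weierstrassE, weierstrassE]
  refine congrArg pexp ?_
  ext1 i
  simp only [coeff_mk]
  by_cases hi : max N M < i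
  · have hNi : N < i := lt_of_le_of_lt (le_max_left N M) hi
    have hMi : M < i := lt_of_le_of_lt (le_max_right N M) hi
    rw [if_pos hNi, if_pos hMi, if_pos hi]
    have hi0 : (i : ℚ) ≠ 0 := Nat.cast_ne_zero.mpr (by omega)
    have hcast : (i : A) = algebraMap ℚ A (i : ℚ) := by simp
    rw [hcast, Algebra.smul_def]
    have h1 : algebraMap ℚ A (i : ℚ) * algebraMap ℚ A ((i : ℚ)⁻¹) = 1 := by
      rw [← map_mul, mul_inv_cancel₀ hi0, map_one]
    linear_combination (-(algebraMap ℚ A ((i : ℚ)⁻¹))) * h1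
  · rw [if_neg hi]
    by_cases hNi : N < i
    · have hMi : ¬ M < i := by omega
      rw [if_neg hMi, mul_zero]
    · rw [if_neg hNi, mul_zero, zero_mul]
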